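/- arXiv:2502.00120 — 2 statements merged into one kernel-verified Lean document; each statement's English description precedes it below -/
import Mathlib

section
/- Let F̂_j(t) = ∫_0^t Ŝ(s) dΛ̂_j(s) and F_j(t) = ∫_0^t S(s) dΛ_j(s), where Ŝ = exp(-Λ̂_1 - Λ̂_2) and S = exp(-Λ_1 - Λ_2). Then F̂_j(t) - F_j(t) = Σ_{i=1,2} ∫_0^t S(s) · [1(i=j) + (F̂_j(s) - F̂_j(t))/Ŝ(s)] d[Λ̂_i(s) - Λ_i(s)]. -/
/-!
With `A = ∑ Λ̂ᵢ` and `B = ∑ Λᵢ`, the ratio `G = S / Ŝ = exp (A - B)` is absolutely continuous,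
and the integrand on the right is, almost everywhere, the derivative of
`(F̂ⱼ - F̂ⱼ(t)) * G - Fⱼ`, using `F̂ⱼ' = Ŝ λ̂ⱼ`, `Fⱼ' = S λⱼ` and `G' = G (∑ λ̂ᵢ - ∑ λᵢ)`.
This function equals `-Fⱼ(t)` at `t` and `-F̂ⱼ(t)` at `0`, so the fundamental theorem of
calculus for absolutely continuous functions gives the identity.
-/

open MeasureTheory intervalIntegral

open Set Filter NNReal Real

section AbsolutelyContinuous

variable {X Y : Type*} [PseudoMetricSpace X] [PseudoMetricSpace Y] {a b : ℝ}

open AbsolutelyContinuousOnInterval in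
theorem LipschitzOnWith.comp_absolutelyContinuousOnInterval {f : ℝ → Y} {φ : Y → X} {K : ℝ≥0}
    {s : Set Y} (hφ : LipschitzOnWith K φ s) (hf : AbsolutelyContinuousOnInterval f a b)
    (hfs : MapsTo f (uIcc a b) s) : AbsolutelyContinuousOnInterval (φ ∘ f) a b := by
  have hK : Tendsto (fun E : ℕ × (ℕ → ℝ × ℝ) ↦
      K * ∑ i ∈ Finset.range E.1, dist (f (E.2 i).1) (f (E.2 i).2))
      (totalLengthFilter ⊓ 𝓟 (disjWithin a b)) (nhds 0) := by
    simpa only [mul_zero] using Tendsto.const_mul (K : ℝ) hf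
  refine squeeze_zero' (Eventually.of_forall fun _ ↦ Finset.sum_nonneg fun _ _ ↦ dist_nonneg)
    ?_ hK
  filter_upwards [eventually_inf_principal.mpr (Eventually.of_forall fun _ ↦ id)] with E hE
  rw [Finset.mul_sum]
  refine Finset.sum_le_sum fun i hi ↦ ?_
  exact hφ.dist_le_mul _ (hfs (hE.1 i hi).1) _ (hfs (hE.1 i hi).2)

theorem ContDiff.comp_absolutelyContinuousOnInterval {E : Type*} [NormedAddCommGroup E]
    [NormedSpace ℝ E] {φ : ℝ → E} {f : ℝ → ℝ} (hφ : ContDiff ℝ 1 φ)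
    (hf : AbsolutelyContinuousOnInterval f a b) :
    AbsolutelyContinuousOnInterval (φ ∘ f) a b := by
  obtain ⟨C, hC⟩ := hf.exists_bound
  obtain ⟨K, hK⟩ := hφ.contDiffOn.exists_lipschitzOnWith one_ne_zero (convex_Icc (-C) C)
    isCompact_Icc
  exact hK.comp_absolutelyContinuousOnInterval hf fun x hx ↦ abs_le.mp (hC x hx)

theorem AbsolutelyContinuousOnInterval.integral_eq_sub_of_ae_hasDerivAt {f f' : ℝ → ℝ}
    (hf : AbsolutelyContinuousOnInterval f a b)
    (hf' : ∀ᵐ x, x ∈ uIcc a b → HasDerivAt f (f' x) x) :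
    ∫ x in a..b, f' x = f b - f a := by
  rw [← hf.integral_deriv_eq_sub]
  refine integral_congr_ae ?_
  filter_upwards [hf'] with x hx hxab
  exact (hx (uIoc_subset_uIcc hxab)).deriv.symm

end AbsolutelyContinuous

theorem continuousOn_exp_neg_integral {f : ℝ → ℝ} {t : ℝ}
    (hf : IntervalIntegrable f volume 0 t) :
    ContinuousOn (fun s ↦ exp (-∫ u in (0:ℝ)..s, f u)) (uIcc 0 t) :=
  (hf.absolutelyContinuousOnInterval_intervalIntegral left_mem_uIcc).continuousOn.neg.rexp

theorem cumulativeIncidence_sub_eq_integral {qhat q lamhat lam Shat S Fhat F : ℝ → ℝ} {t : ℝ}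
    (hqhat : IntervalIntegrable qhat volume 0 t) (hq : IntervalIntegrable q volume 0 t)
    (hlamhat : IntervalIntegrable lamhat volume 0 t) (hlam : IntervalIntegrable lam volume 0 t)
    (hShat : ∀ s, Shat s = exp (-∫ u in (0:ℝ)..s, qhat u))
    (hS : ∀ s, S s = exp (-∫ u in (0:ℝ)..s, q u))
    (hFhat : ∀ s, Fhat s = ∫ u in (0:ℝ)..s, Shat u * lamhat u)
    (hF : ∀ s, F s = ∫ u in (0:ℝ)..s, S u * lam u) :
    Fhat t - F t = ∫ s in (0:ℝ)..t,
      S s * (lamhat s - lam s + (Fhat s - Fhat t) / Shat s * (qhat s - q s)) := by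
  have h0 : (0:ℝ) ∈ uIcc 0 t := left_mem_uIcc
  have hShatlamhat : IntervalIntegrable (fun u ↦ Shat u * lamhat u) volume 0 t :=
    hlamhat.continuousOn_mul (funext hShat ▸ continuousOn_exp_neg_integral hqhat)
  have hSlam : IntervalIntegrable (fun u ↦ S u * lam u) volume 0 t :=
    hlam.continuousOn_mul (funext hS ▸ continuousOn_exp_neg_integral hq)
  set G := fun s ↦ exp ((∫ u in (0:ℝ)..s, qhat u) - ∫ u in (0:ℝ)..s, q u)
  have hG : AbsolutelyContinuousOnInterval G 0 t :=
    contDiff_exp.comp_absolutelyContinuousOnInterval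
      ((hqhat.absolutelyContinuousOnInterval_intervalIntegral h0).sub
        (hq.absolutelyContinuousOnInterval_intervalIntegral h0))
  have hΦ : AbsolutelyContinuousOnInterval (fun s ↦ (Fhat s - Fhat t) * G s - F s) 0 t :=
    (((funext hFhat ▸ hShatlamhat.absolutelyContinuousOnInterval_intervalIntegral h0).sub
      (LipschitzWith.const (Fhat t)).lipschitzOnWith.absolutelyContinuousOnInterval).mul hG).sub
      (funext hF ▸ hSlam.absolutelyContinuousOnInterval_intervalIntegral h0)
  rw [eq_comm]
  convert hΦ.integral_eq_sub_of_ae_hasDerivAt ?_ using 1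
  · simp only [G, hF 0, hFhat 0, integral_same, sub_self, exp_zero]
    ring
  filter_upwards [hqhat.ae_hasDerivAt_integral, hq.ae_hasDerivAt_integral,
    hShatlamhat.ae_hasDerivAt_integral, hSlam.ae_hasDerivAt_integral] with x hA hB hP hQ hx
  have hFhat' : HasDerivAt Fhat (Shat x * lamhat x) x := funext hFhat ▸ hP hx 0 h0
  have hF' : HasDerivAt F (S x * lam x) x := funext hF ▸ hQ hx 0 h0
  refine (((hFhat'.sub_const (Fhat t)).mul ((hA hx 0 h0).sub (hB hx 0 h0)).exp).sub
    hF').congr_deriv ?_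
  rw [hS, hShat, Pi.sub_apply, exp_sub, exp_neg, exp_neg]
  field_simp
  ring

theorem cumulativeIncidence_sub_eq_sum_integral {ι : Type*} [Fintype ι] [DecidableEq ι]
    {lamhat lam : ι → ℝ → ℝ} {Shat S Fhat F : ℝ → ℝ} {j : ι} {t : ℝ}
    (hlamhat : ∀ i s, IntervalIntegrable (lamhat i) volume 0 s)
    (hlam : ∀ i s, IntervalIntegrable (lam i) volume 0 s)
    (hShat : ∀ s, Shat s = exp (-∑ i, ∫ u in (0:ℝ)..s, lamhat i u))
    (hS : ∀ s, S s = exp (-∑ i, ∫ u in (0:ℝ)..s, lam i u))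
    (hFhat : ∀ s, Fhat s = ∫ u in (0:ℝ)..s, Shat u * lamhat j u)
    (hF : ∀ s, F s = ∫ u in (0:ℝ)..s, S u * lam j u) :
    Fhat t - F t = ∑ i, ∫ s in (0:ℝ)..t,
      S s * ((if i = j then (1:ℝ) else 0) + (Fhat s - Fhat t) / Shat s)
        * (lamhat i s - lam i s) := by
  have hsum {μ : ι → ℝ → ℝ} (hμ : ∀ i s, IntervalIntegrable (μ i) volume 0 s) (s : ℝ) :
      ∑ i, ∫ u in (0:ℝ)..s, μ i u = ∫ u in (0:ℝ)..s, ∑ i, μ i u :=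
    (intervalIntegral.integral_finsetSum fun i _ ↦ hμ i s).symm
  have hShat' : ∀ s, Shat s = exp (-∫ u in (0:ℝ)..s, ∑ i, lamhat i u) := by
    simpa only [hsum hlamhat] using hShat
  have hS' : ∀ s, S s = exp (-∫ u in (0:ℝ)..s, ∑ i, lam i u) := by
    simpa only [hsum hlam] using hS
  have hint {μ : ι → ℝ → ℝ} (hμ : ∀ i s, IntervalIntegrable (μ i) volume 0 s) (s : ℝ) :
      IntervalIntegrable (fun u ↦ ∑ i, μ i u) volume 0 s := by
    simpa only [Finset.sum_fn] using IntervalIntegrable.sum Finset.univ fun i _ ↦ hμ i s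
  have hShatc : ContinuousOn Shat (uIcc 0 t) :=
    funext hShat' ▸ continuousOn_exp_neg_integral (hint hlamhat t)
  have hSc : ContinuousOn S (uIcc 0 t) :=
    funext hS' ▸ continuousOn_exp_neg_integral (hint hlam t)
  have hFhatc : ContinuousOn Fhat (uIcc 0 t) :=
    funext hFhat ▸ (((hlamhat j t).continuousOn_mul hShatc)
      |>.absolutelyContinuousOnInterval_intervalIntegral left_mem_uIcc).continuousOn
  rw [cumulativeIncidence_sub_eq_integral (hint hlamhat t) (hint hlam t) (hlamhat j t)
    (hlam j t) hShat' hS' hFhat hF, ← intervalIntegral.integral_finsetSum]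
  · refine integral_congr fun s _ ↦ ?_
    simp only [mul_add, add_mul, Finset.sum_add_distrib, mul_ite, ite_mul, mul_one, mul_zero,
      zero_mul, Finset.sum_ite_eq', Finset.mem_univ, if_true, ← Finset.mul_sum,
      Finset.sum_sub_distrib]
    ring
  · intro i _
    exact ((hlamhat i t).sub (hlam i t)).continuousOn_mul (hSc.mul (continuousOn_const.add
      ((hFhatc.sub continuousOn_const).div hShatc fun s _ ↦ (hShat s).trans_ne (exp_pos _).ne')))

theorem stmt7_general (lamhat lam : Fin 2 → ℝ → ℝ) (Lamhat Lam : Fin 2 → ℝ → ℝ)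
    (Shat S : ℝ → ℝ) (Fhat F : Fin 2 → ℝ → ℝ) (j : Fin 2) (t : ℝ)
    (hint1 : ∀ i s, IntervalIntegrable (lamhat i) volume 0 s)
    (hint2 : ∀ i s, IntervalIntegrable (lam i) volume 0 s)
    (hLamhat : ∀ i s, Lamhat i s = ∫ u in (0:ℝ)..s, lamhat i u)
    (hLam : ∀ i s, Lam i s = ∫ u in (0:ℝ)..s, lam i u)
    (hShat : ∀ s, Shat s = Real.exp (-(Lamhat 0 s + Lamhat 1 s)))
    (hS : ∀ s, S s = Real.exp (-(Lam 0 s + Lam 1 s)))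
    (hFhat : ∀ i s, Fhat i s = ∫ u in (0:ℝ)..s, Shat u * lamhat i u)
    (hF : ∀ i s, F i s = ∫ u in (0:ℝ)..s, S u * lam i u) :
    Fhat j t - F j t
      = ∑ i : Fin 2, ∫ s in (0:ℝ)..t,
          S s * ((if i = j then (1:ℝ) else 0) + (Fhat j s - Fhat j t) / Shat s)
            * (lamhat i s - lam i s) := by
  refine cumulativeIncidence_sub_eq_sum_integral hint1 hint2 (fun s ↦ ?_) (fun s ↦ ?_)
    (hFhat j) (hF j)
  · rw [hShat, Fin.sum_univ_two, hLamhat, hLamhat]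
  · rw [hS, Fin.sum_univ_two, hLam, hLam]

/-- expansion of the difference of cumulative incidence functions.
With cause-specific hazard densities `λ̂ᵢ, λᵢ` (`i ∈ {1,2}`, here `i : Fin 2`),
`Ŝ = exp(-Λ̂₁-Λ̂₂)`, `S = exp(-Λ₁-Λ₂)`, `F̂_j(t) = ∫_0^t Ŝ λ̂_j`, `F_j(t) = ∫_0^t S λ_j`:
`F̂_j(t) - F_j(t) = Σ_{i=1,2} ∫_0^t S(s)·[1(i=j) + (F̂_j(s) - F̂_j(t))/Ŝ(s)]·(λ̂ᵢ(s) - λᵢ(s)) ds`. -/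
theorem stmt7 (lamhat lam : Fin 2 → ℝ → ℝ) (Lamhat Lam : Fin 2 → ℝ → ℝ)
    (Shat S : ℝ → ℝ) (Fhat F : Fin 2 → ℝ → ℝ) (j : Fin 2) (t : ℝ) (ht : 0 ≤ t)
    (hpos1 : ∀ i u, 0 ≤ lamhat i u) (hpos2 : ∀ i u, 0 ≤ lam i u)
    (hint1 : ∀ i s, IntervalIntegrable (lamhat i) volume 0 s)
    (hint2 : ∀ i s, IntervalIntegrable (lam i) volume 0 s)
    (hLamhat : ∀ i s, Lamhat i s = ∫ u in (0:ℝ)..s, lamhat i u)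
    (hLam : ∀ i s, Lam i s = ∫ u in (0:ℝ)..s, lam i u)
    (hShat : ∀ s, Shat s = Real.exp (-(Lamhat 0 s + Lamhat 1 s)))
    (hS : ∀ s, S s = Real.exp (-(Lam 0 s + Lam 1 s)))
    (hFhat : ∀ i s, Fhat i s = ∫ u in (0:ℝ)..s, Shat u * lamhat i u)
    (hF : ∀ i s, F i s = ∫ u in (0:ℝ)..s, S u * lam i u) :
    Fhat j t - F j t
      = ∑ i : Fin 2, ∫ s in (0:ℝ)..t,
          S s * ((if i = j then (1:ℝ) else 0) + (Fhat j s - Fhat j t) / Shat s)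
            * (lamhat i s - lam i s) :=
  stmt7_general lamhat lam Lamhat Lam Shat S Fhat F j t hint1 hint2 hLamhat hLam hShat hS hFhat hF
end

section
/- Define H_j(s, t*) = ∫_s^{t*} (F_j(u) - F_j(s))/S(s) du and H_{ij}(s, t*) = ∫_s^{t*} [1(i=j) + (F_j(s) - F_j(u))/S(s)] du. Then for 0 ≤ s ≤ t*, H_j(s, t*) = ∫_s^{t*} (F_j(u) - F_j(s))/S(s) du = ∫_s^{t*} Σ_{i=1,2} H_{ij}(w, t*) dΛ_i(w); equivalently, the measure dH_j(s, t*) in s equals -Σ_{i=1,2} H_{ij}(s, t*) dΛ_i(s). -/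
open MeasureTheory intervalIntegral Set

lemma fub {a b : ℝ} (hab : a ≤ b) {f g : ℝ → ℝ}
    (hf : IntervalIntegrable f volume a b) (hg : IntervalIntegrable g volume a b) :
    ∫ w in a..b, g w * ∫ v in w..b, f v = ∫ v in a..b, (∫ w in a..v, g w) * f v := by
  have hfI : IntegrableOn f (Ioc a b) volume :=
    (intervalIntegrable_iff_integrableOn_Ioc_of_le hab).1 hf
  have hgI : IntegrableOn g (Ioc a b) volume :=
    (intervalIntegrable_iff_integrableOn_Ioc_of_le hab).1 hg
  set μ := volume.restrict (Ioc a b) with hμ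
  set K : ℝ × ℝ → ℝ := fun p => {q : ℝ × ℝ | q.1 < q.2}.indicator (fun q => g q.1 * f q.2) p
    with hK
  have hmeas : MeasurableSet {q : ℝ × ℝ | q.1 < q.2} :=
    measurableSet_lt measurable_fst measurable_snd
  have hKint : Integrable K (μ.prod μ) := (Integrable.mul_prod hgI hfI).indicator hmeas
  have swap := MeasureTheory.integral_integral_swap (f := fun w v => K (w, v)) (μ := μ) (ν := μ)
    hKint
  have hleft : ∀ w ∈ Ioc a b, (∫ v, K (w, v) ∂μ) = g w * ∫ v in w..b, f v := by
    intro w hw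
    have h1 : (fun v => K (w, v)) = (Ioi w).indicator (fun v => g w * f v) := by
      ext v; simp [hK, Set.indicator_apply, Set.mem_Ioi]
    have h2 : Ioc a b ∩ Ioi w = Ioc w b := by
      ext x; simp only [mem_inter_iff, mem_Ioc, mem_Ioi]
      constructor
      · rintro ⟨⟨_, hx2⟩, hx3⟩; exact ⟨hx3, hx2⟩
      · rintro ⟨hx1, hx2⟩; exact ⟨⟨lt_trans hw.1 hx1, hx2⟩, hx1⟩
    rw [h1, MeasureTheory.integral_indicator measurableSet_Ioi,
      hμ, Measure.restrict_restrict measurableSet_Ioi, Set.inter_comm, h2,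
      intervalIntegral.integral_of_le hw.2, MeasureTheory.integral_const_mul]
  have hright : ∀ v ∈ Ioc a b, (∫ w, K (w, v) ∂μ) = (∫ w in a..v, g w) * f v := by
    intro v hv
    have h1 : (fun w => K (w, v)) = (Iio v).indicator (fun w => g w * f v) := by
      ext w; simp [hK, Set.indicator_apply, Set.mem_Iio]
    have h2 : Ioc a b ∩ Iio v = Ioo a v := by
      ext x; simp only [mem_inter_iff, mem_Ioc, mem_Iio, mem_Ioo]
      constructor
      · rintro ⟨⟨hx1, _⟩, hx3⟩; exact ⟨hx1, hx3⟩
      · rintro ⟨hx1, hx2⟩; exact ⟨⟨hx1, le_trans hx2.le hv.2⟩, hx2⟩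
    rw [h1, MeasureTheory.integral_indicator measurableSet_Iio,
      hμ, Measure.restrict_restrict measurableSet_Iio, Set.inter_comm, h2,
      intervalIntegral.integral_of_le hv.1.le, ← MeasureTheory.integral_Ioc_eq_integral_Ioo,
      ← MeasureTheory.integral_mul_const]
  calc ∫ w in a..b, g w * ∫ v in w..b, f v
      = ∫ w, (∫ v, K (w, v) ∂μ) ∂μ := by
        rw [intervalIntegral.integral_of_le hab]
        exact (setIntegral_congr_fun measurableSet_Ioc hleft).symm
    _ = ∫ v, (∫ w, K (w, v) ∂μ) ∂μ := swap
    _ = ∫ v in a..b, (∫ w in a..v, g w) * f v := by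
        rw [intervalIntegral.integral_of_le hab]
        exact setIntegral_congr_fun measurableSet_Ioc hright

lemma intA {a b : ℝ} (hab : a ≤ b) {f : ℝ → ℝ}
    (hf : ∀ u v : ℝ, IntervalIntegrable f volume u v) :
    ∫ u in a..b, (∫ v in a..u, f v) = ∫ v in a..b, (b - v) * f v := by
  have h1 : ∫ w in a..b, (1:ℝ) * ∫ v in w..b, f v = ∫ v in a..b, (∫ w in a..v, (1:ℝ)) * f v :=
    fub hab (hf a b) (continuous_const.intervalIntegrable a b)
  simp only [one_mul, integral_one] at h1
  have h2 : ∀ u, (∫ v in a..u, f v) = (∫ v in a..b, f v) - ∫ v in u..b, f v := by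
    intro u
    rw [← intervalIntegral.integral_add_adjacent_intervals (hf a u) (hf u b)]; ring
  rw [intervalIntegral.integral_congr
    (g := fun u => (∫ v in a..b, f v) - ∫ v in u..b, f v) (fun u _ => h2 u)]
  have hc : Continuous fun u => ∫ v in u..b, f v := by
    have h := intervalIntegral.continuous_primitive (fun u v => hf u v) b
    have : (fun u => ∫ v in u..b, f v) = fun u => -∫ v in b..u, f v := by
      ext u; rw [intervalIntegral.integral_symm]
    rw [this]; exact h.neg
  rw [intervalIntegral.integral_sub (_root_.intervalIntegrable_const (c := ∫ v in a..b, f v))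
    (hc.intervalIntegrable a b), h1,
    show (∫ _ in a..b, (∫ v in a..b, f v)) = (b - a) • ∫ v in a..b, f v from integral_const _]
  have h3 : ∀ v, (b - v) * f v = (b - a) * f v - (v - a) * f v := by intro v; ring
  rw [intervalIntegral.integral_congr (g := fun v => (b - a) * f v - (v - a) * f v)
    (fun v _ => h3 v),
    intervalIntegral.integral_sub ((hf a b).continuousOn_mul continuousOn_const)
      ((hf a b).continuousOn_mul (by fun_prop)),
    intervalIntegral.integral_const_mul, smul_eq_mul]

lemma powD {a b : ℝ} {lam : ℝ → ℝ}
    (hl : ∀ u v : ℝ, IntervalIntegrable lam volume u v) :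
    ∀ n : ℕ, ∀ u, a ≤ u → u ≤ b →
      ∫ w in u..b, lam w * (∫ x in a..w, lam x) ^ n
        = ((∫ x in a..b, lam x) ^ (n+1) - (∫ x in a..u, lam x) ^ (n+1)) / (n+1) := by
  set M : ℝ → ℝ := fun w => ∫ x in a..w, lam x with hM
  have hMc : Continuous M := intervalIntegral.continuous_primitive (fun u v => hl u v) a
  intro n
  induction n with
  | zero =>
    intro u hau hub
    simp only [pow_zero, mul_one, pow_one, Nat.cast_zero, zero_add, div_one]
    have := integral_add_adjacent_intervals (hl a u) (hl u b)
    linarith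
  | succ n IH =>
    intro u hau hub
    have hMn : Continuous fun w => M w ^ n := hMc.pow n
    have hMn1 : Continuous fun w => M w ^ (n+1) := hMc.pow (n+1)
    have hH : ∀ p q : ℝ, IntervalIntegrable (fun w => lam w * M w ^ n) volume p q :=
      fun p q => (hl p q).mul_continuousOn hMn.continuousOn
    have hH1 : ∀ p q : ℝ, IntervalIntegrable (fun w => lam w * M w ^ (n+1)) volume p q :=
      fun p q => (hl p q).mul_continuousOn hMn1.continuousOn
    have eqM : ∀ w, M w = M u + ∫ x in u..w, lam x := fun w =>
      (integral_add_adjacent_intervals (hl a u) (hl u w)).symm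
    have hprim : Continuous fun w => ∫ x in u..w, lam x :=
      intervalIntegral.continuous_primitive (fun p q => hl p q) u
    -- split the integral
    have split : (∫ w in u..b, lam w * M w ^ (n+1))
        = (∫ w in u..b, lam w * M w ^ n) * M u
          + ∫ w in u..b, (lam w * M w ^ n) * ∫ x in u..w, lam x := by
      rw [← intervalIntegral.integral_mul_const, ← intervalIntegral.integral_add
        ((hH u b).mul_const _)
        ((hH u b).mul_continuousOn hprim.continuousOn)]
      apply intervalIntegral.integral_congr
      intro w _
      show lam w * M w ^ (n+1) = lam w * M w ^ n * M u + lam w * M w ^ n * ∫ x in u..w, lam x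
      have h1 : M w ^ (n+1) = M w ^ n * M w := by rw [pow_succ]
      rw [h1, eqM w]; ring
    -- Fubini on the second term
    have fubeq : (∫ w in u..b, (lam w * M w ^ n) * ∫ x in u..w, lam x)
        = ∫ w in u..b, lam w * ∫ v in w..b, lam v * M v ^ n := by
      rw [fub hub (hH u b) (hl u b)]
      apply intervalIntegral.integral_congr
      intro w _; ring
    -- use IH inside
    have inner : ∀ w ∈ Set.uIcc u b,
        (∫ v in w..b, lam v * M v ^ n) = (M b ^ (n+1) - M w ^ (n+1)) / (n+1) := by
      intro w hw
      rw [Set.uIcc_of_le hub] at hw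
      exact IH w (le_trans hau hw.1) hw.2
    have step2 : (∫ w in u..b, lam w * ∫ v in w..b, lam v * M v ^ n)
        = (M b ^ (n+1) * (M b - M u) - ∫ w in u..b, lam w * M w ^ (n+1)) / (n+1) := by
      rw [intervalIntegral.integral_congr (g := fun w =>
          (M b ^ (n+1) * lam w - lam w * M w ^ (n+1)) / (n+1)) ?_]
      · rw [intervalIntegral.integral_div, intervalIntegral.integral_sub
          ((hl u b).continuousOn_mul continuousOn_const) (hH1 u b), intervalIntegral.integral_const_mul]
        have hub' : (∫ x in u..b, lam x) = M b - M u := by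
          have := integral_add_adjacent_intervals (hl a u) (hl u b)
          linarith
        rw [hub']
      · intro w hw
        show lam w * (∫ v in w..b, lam v * M v ^ n)
          = (M b ^ (n+1) * lam w - lam w * M w ^ (n+1)) / (n+1)
        rw [inner w hw]; ring
    have hk : ((n:ℝ) + 1) ≠ 0 := by positivity
    have hk2 : ((n:ℝ) + 1 + 1) ≠ 0 := by positivity
    have IHM : ∀ u', a ≤ u' → u' ≤ b →
        (∫ w in u'..b, lam w * M w ^ n) = (M b ^ (n+1) - M u' ^ (n+1)) / (n+1) :=
      fun u' h1 h2 => IH u' h1 h2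
    have E := split
    rw [fubeq, step2, IHM u hau hub] at E
    push_cast
    show (∫ w in u..b, lam w * M w ^ (n+1))
      = (M b ^ (n+1+1) - M u ^ (n+1+1)) / ((n:ℝ) + 1 + 1)
    field_simp at E ⊢
    linear_combination E

lemma expC {a b : ℝ} (hab : a ≤ b) {lam : ℝ → ℝ} (hpos : ∀ u, 0 ≤ lam u)
    (hl : ∀ u v : ℝ, IntervalIntegrable lam volume u v) :
    ∫ w in a..b, lam w * Real.exp (∫ x in a..w, lam x)
      = Real.exp (∫ x in a..b, lam x) - 1 := by
  have hMc : Continuous fun w => ∫ x in a..w, lam x :=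
    intervalIntegral.continuous_primitive (fun u v => hl u v) a
  set c : ℝ := ∫ x in a..b, lam x with hc
  have hMnonneg : ∀ w ∈ Set.Ioc a b, 0 ≤ ∫ x in a..w, lam x := by
    intro w hw
    exact intervalIntegral.integral_nonneg hw.1.le (fun u _ => hpos u)
  -- each term
  set Fn : ℕ → ℝ → ℝ := fun n w => lam w * (∫ x in a..w, lam x) ^ n / (Nat.factorial n : ℝ)
    with hFn
  have hFnint : ∀ n, IntervalIntegrable (Fn n) volume a b := by
    intro n
    exact ((hl a b).mul_continuousOn (hMc.pow n).continuousOn).div_const _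
  have hval : ∀ n, (∫ w in a..b, Fn n w) = c ^ (n+1) / (Nat.factorial (n+1) : ℝ) := by
    intro n
    have hD := powD (a := a) (b := b) hl n a le_rfl hab
    simp only [intervalIntegral.integral_same, zero_pow (Nat.succ_ne_zero n), sub_zero] at hD
    have : (∫ w in a..b, Fn n w)
        = (∫ w in a..b, lam w * (∫ x in a..w, lam x) ^ n) / (Nat.factorial n : ℝ) := by
      simp only [hFn]
      rw [intervalIntegral.integral_div]
    rw [this, hD, hc, Nat.factorial_succ]
    push_cast
    have h1 : ((n:ℝ) + 1) ≠ 0 := by positivity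
    have h2 : ((Nat.factorial n : ℝ)) ≠ 0 := by positivity
    field_simp
  have hnonneg : ∀ n, ∀ w ∈ Set.Ioc a b, 0 ≤ Fn n w := by
    intro n w hw
    have := hMnonneg w hw
    have h2 : (0:ℝ) ≤ (∫ x in a..w, lam x) ^ n := pow_nonneg this n
    simp only [hFn]
    exact div_nonneg (mul_nonneg (hpos w) h2) (by positivity)
  -- set-integral versions
  have hset : ∀ n, (∫ w in Set.Ioc a b, Fn n w) = c ^ (n+1) / (Nat.factorial (n+1) : ℝ) := by
    intro n
    rw [← intervalIntegral.integral_of_le hab]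
    exact hval n
  have hsetnorm : ∀ n, (∫ w in Set.Ioc a b, ‖Fn n w‖) = c ^ (n+1) / (Nat.factorial (n+1) : ℝ) := by
    intro n
    rw [← hset n]
    apply setIntegral_congr_fun measurableSet_Ioc
    intro w hw
    exact Real.norm_of_nonneg (hnonneg n w hw)
  have hFint : ∀ n, Integrable (Fn n) (volume.restrict (Set.Ioc a b)) := by
    intro n
    exact (intervalIntegrable_iff_integrableOn_Ioc_of_le hab).1 (hFnint n)
  have hsum : Summable fun n => ∫ w in Set.Ioc a b, ‖Fn n w‖ := by
    simp only [hsetnorm]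
    exact (summable_nat_add_iff 1).2 (Real.summable_pow_div_factorial c)
  have hswap := MeasureTheory.integral_tsum_of_summable_integral_norm hFint hsum
  -- identify the tsum integrand
  have hexp : ∀ w, (∑' n, Fn n w) = lam w * Real.exp (∫ x in a..w, lam x) := by
    intro w
    rw [Real.exp_eq_exp_ℝ, NormedSpace.exp_eq_tsum_div]
    simp only [hFn]
    rw [← tsum_mul_left]
    congr 1; ext n; ring
  have hlhs : (∫ w in a..b, lam w * Real.exp (∫ x in a..w, lam x))
      = ∑' n, ∫ w in Set.Ioc a b, Fn n w := by
    rw [hswap, intervalIntegral.integral_of_le hab]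
    apply setIntegral_congr_fun measurableSet_Ioc
    intro w _
    exact (hexp w).symm
  rw [hlhs]
  simp only [hset]
  have hs := Real.summable_pow_div_factorial c
  have h0 := Summable.tsum_eq_zero_add hs
  simp only [pow_zero, Nat.factorial_zero, Nat.cast_one, div_one] at h0
  rw [Real.exp_eq_exp_ℝ, NormedSpace.exp_eq_tsum_div]
  simp only []
  rw [h0]; ring

/-- with `S = exp(-Λ₁-Λ₂)`, `F_j(t) = ∫_0^t S λ_j`, and
`H_{ij}(w,t*) = ∫_w^{t*} (1(i=j) + (F_j(w) - F_j(u))/S(w)) du`, for `0 ≤ s ≤ t*`: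
`∫_s^{t*} (F_j(u) - F_j(s))/S(s) du = ∫_s^{t*} Σ_{i=1,2} H_{ij}(w,t*) λ_i(w) dw`. -/
theorem stmt12 (lam : Fin 2 → ℝ → ℝ) (Lam : Fin 2 → ℝ → ℝ) (S : ℝ → ℝ)
    (F : Fin 2 → ℝ → ℝ) (H : Fin 2 → Fin 2 → ℝ → ℝ) (j : Fin 2) (tstar : ℝ)
    (hpos : ∀ i u, 0 ≤ lam i u)
    (hint : ∀ i s, IntervalIntegrable (lam i) volume 0 s)
    (hLam : ∀ i s, Lam i s = ∫ u in (0:ℝ)..s, lam i u)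
    (hS : ∀ s, S s = Real.exp (-(Lam 0 s + Lam 1 s)))
    (hF : ∀ i s, F i s = ∫ u in (0:ℝ)..s, S u * lam i u)
    (hH : ∀ i i' w, H i i' w
      = ∫ u in w..tstar, ((if i = i' then (1:ℝ) else 0) + (F i' w - F i' u) / S w)) :
    ∀ s, 0 ≤ s → s ≤ tstar →
      (∫ u in s..tstar, (F j u - F j s) / S s)
        = ∫ w in s..tstar, (∑ i : Fin 2, H i j w * lam i w) := by
  intro s hs0 hst
  have hl : ∀ (i : Fin 2) (u v : ℝ), IntervalIntegrable (lam i) volume u v :=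
    fun i u v => ((hint i u).symm.trans (hint i v))
  have hlT : ∀ u v : ℝ, IntervalIntegrable (fun w => lam 0 w + lam 1 w) volume u v :=
    fun u v => (hl 0 u v).add (hl 1 u v)
  have hLamc : ∀ i : Fin 2, Continuous (Lam i) := by
    intro i
    have h : Lam i = fun x => ∫ u in (0:ℝ)..x, lam i u := funext (hLam i)
    rw [h]; exact intervalIntegral.continuous_primitive (fun u v => hl i u v) 0
  have hSc : Continuous S := by
    have h : S = fun x => Real.exp (-(Lam 0 x + Lam 1 x)) := funext hS
    rw [h]; exact Real.continuous_exp.comp ((hLamc 0).add (hLamc 1)).neg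
  have hSpos : ∀ u, 0 < S u := fun u => by rw [hS u]; exact Real.exp_pos _
  have hSne : ∀ u, S u ≠ 0 := fun u => (hSpos u).ne'
  have hSl : ∀ u v : ℝ, IntervalIntegrable (fun w => S w * lam j w) volume u v :=
    fun u v => (hl j u v).continuousOn_mul hSc.continuousOn
  have hfint : ∀ u v : ℝ,
      IntervalIntegrable (fun x => (tstar - x) * (S x * lam j x)) volume u v :=
    fun u v => (hSl u v).continuousOn_mul (by fun_prop)
  have hFd : ∀ u v : ℝ, F j v - F j u = ∫ x in u..v, S x * lam j x := by
    intro u v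
    rw [hF j u, hF j v,
      ← intervalIntegral.integral_add_adjacent_intervals (hSl 0 u) (hSl u v)]
    ring
  have hFc : Continuous (F j) := by
    have h : F j = fun x => ∫ u in (0:ℝ)..x, S u * lam j u := funext (hF j)
    rw [h]; exact intervalIntegral.continuous_primitive (fun u v => hSl u v) 0
  set G : ℝ → ℝ := fun w => ∫ v in w..tstar, (tstar - v) * (S v * lam j v) with hG
  have hGc : Continuous G := by
    have h := (intervalIntegral.continuous_primitive (fun u v => hfint u v) tstar).neg
    have h2 : G = fun w => -∫ v in tstar..w, (tstar - v) * (S v * lam j v) := by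
      ext w; rw [hG]; exact intervalIntegral.integral_symm tstar w
    rw [h2]; exact h
  have hT : ∀ w, Lam 0 w + Lam 1 w = ∫ x in (0:ℝ)..w, (lam 0 x + lam 1 x) := by
    intro w
    rw [hLam 0 w, hLam 1 w, intervalIntegral.integral_add (hl 0 0 w) (hl 1 0 w)]
  have hinv : ∀ w, (S w)⁻¹ = Real.exp (∫ x in (0:ℝ)..w, (lam 0 x + lam 1 x)) := by
    intro w; rw [hS w, ← Real.exp_neg, neg_neg, hT w]
  have hSinv : ∀ v, s ≤ v →
      (∫ w in s..v, (lam 0 w + lam 1 w) * (S w)⁻¹) = (S v)⁻¹ - (S s)⁻¹ := by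
    intro v hv
    have hposT : ∀ u, 0 ≤ lam 0 u + lam 1 u := fun u => add_nonneg (hpos 0 u) (hpos 1 u)
    have base := expC hv hposT hlT
    have hsplit : ∀ w, (∫ x in (0:ℝ)..w, (lam 0 x + lam 1 x))
        = (∫ x in (0:ℝ)..s, (lam 0 x + lam 1 x)) + ∫ x in s..w, (lam 0 x + lam 1 x) :=
      fun w => (intervalIntegral.integral_add_adjacent_intervals (hlT 0 s) (hlT s w)).symm
    have congr1 : (∫ w in s..v, (lam 0 w + lam 1 w) * (S w)⁻¹)
        = ∫ w in s..v, ((lam 0 w + lam 1 w)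
            * Real.exp (∫ x in s..w, (lam 0 x + lam 1 x)))
            * Real.exp (∫ x in (0:ℝ)..s, (lam 0 x + lam 1 x)) := by
      apply intervalIntegral.integral_congr
      intro w _
      show (lam 0 w + lam 1 w) * (S w)⁻¹ = _
      rw [hinv w, hsplit w, Real.exp_add]; ring
    rw [congr1, intervalIntegral.integral_mul_const, base, hinv v, hinv s, hsplit v, Real.exp_add]
    ring
  -- LHS computation
  have hL1 : (∫ u in s..tstar, (F j u - F j s))
      = ∫ v in s..tstar, (tstar - v) * (S v * lam j v) := by
    have congr2 : (∫ u in s..tstar, (F j u - F j s))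
        = ∫ u in s..tstar, ∫ x in s..u, S x * lam j x :=
      intervalIntegral.integral_congr (fun u _ => hFd s u)
    rw [congr2]
    exact intA hst (fun u v => hSl u v)
  have hLHS : (∫ u in s..tstar, (F j u - F j s) / S s)
      = (∫ v in s..tstar, (tstar - v) * (S v * lam j v)) * (S s)⁻¹ := by
    rw [intervalIntegral.integral_div, hL1, div_eq_mul_inv]
  -- H values
  have hHval : ∀ (i : Fin 2), ∀ w ∈ Set.uIcc s tstar, H i j w
      = (if i = j then (1:ℝ) else 0) * (tstar - w) - G w * (S w)⁻¹ := by
    intro i w hw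
    rw [Set.uIcc_of_le hst] at hw
    rw [hH i j w]
    have hcont : Continuous fun u => (F j w - F j u) / S w :=
      (continuous_const.sub hFc).div_const _
    rw [intervalIntegral.integral_add (_root_.intervalIntegrable_const)
      (hcont.intervalIntegrable w tstar)]
    have e1 : (∫ _ in w..tstar, (if i = j then (1:ℝ) else 0))
        = (tstar - w) • (if i = j then (1:ℝ) else 0) := integral_const _
    have e2 : (∫ u in w..tstar, (F j w - F j u) / S w)
        = (∫ u in w..tstar, (F j w - F j u)) / S w := intervalIntegral.integral_div _ _
    have e3 : (∫ u in w..tstar, (F j w - F j u)) = - G w := by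
      have c3 : (∫ u in w..tstar, (F j w - F j u))
          = ∫ u in w..tstar, -(∫ x in w..u, S x * lam j x) := by
        apply intervalIntegral.integral_congr
        intro u _
        show F j w - F j u = -(∫ x in w..u, S x * lam j x)
        rw [← hFd w u]; ring
      rw [c3, intervalIntegral.integral_neg, hG]
      have := intA (a := w) (b := tstar) hw.2 (fun u v => hSl u v)
      rw [this]
    rw [e1, e2, e3]
    rw [smul_eq_mul, neg_div, div_eq_mul_inv]
    ring
  have hj : j = 0 ∨ j = 1 := by
    have hlt : j.val < 2 := j.isLt
    have hv : j.val = 0 ∨ j.val = 1 := by omega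
    rcases hv with h | h
    · exact Or.inl (Fin.ext h)
    · exact Or.inr (Fin.ext h)
  have hsum : ∀ w ∈ Set.uIcc s tstar, (∑ i : Fin 2, H i j w * lam i w)
      = (tstar - w) * lam j w
        - ((lam 0 w + lam 1 w) * (S w)⁻¹) * G w := by
    intro w hw
    rw [Fin.sum_univ_two, hHval 0 w hw, hHval 1 w hw]
    rcases hj with rfl | rfl <;> simp <;> ring
  -- RHS assembly
  have hgl : ∀ u v : ℝ,
      IntervalIntegrable (fun w => (lam 0 w + lam 1 w) * (S w)⁻¹) volume u v :=
    fun u v => (hlT u v).mul_continuousOn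
      (hSc.continuousOn.inv₀ (fun x _ => hSne x))
  have int1 : IntervalIntegrable (fun w => (tstar - w) * lam j w) volume s tstar :=
    (hl j s tstar).continuousOn_mul (by fun_prop)
  have int2 : IntervalIntegrable
      (fun w => ((lam 0 w + lam 1 w) * (S w)⁻¹) * G w) volume s tstar :=
    (hgl s tstar).mul_continuousOn hGc.continuousOn
  have hrhs1 : (∫ w in s..tstar, ∑ i : Fin 2, H i j w * lam i w)
      = (∫ w in s..tstar, (tstar - w) * lam j w)
        - ∫ w in s..tstar, ((lam 0 w + lam 1 w) * (S w)⁻¹) * G w := by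
    rw [← intervalIntegral.integral_sub int1 int2]
    exact intervalIntegral.integral_congr (fun w hw => by
      rw [hsum w hw])
  have hrhs2 : (∫ w in s..tstar, ((lam 0 w + lam 1 w) * (S w)⁻¹) * G w)
      = ∫ v in s..tstar, (∫ w in s..v, (lam 0 w + lam 1 w) * (S w)⁻¹)
          * ((tstar - v) * (S v * lam j v)) := by
    exact fub hst (hfint s tstar) (hgl s tstar)
  have hrhs3 : (∫ v in s..tstar, (∫ w in s..v, (lam 0 w + lam 1 w) * (S w)⁻¹)
          * ((tstar - v) * (S v * lam j v)))
      = ∫ v in s..tstar, ((tstar - v) * lam j v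
          - ((tstar - v) * (S v * lam j v)) * (S s)⁻¹) := by
    apply intervalIntegral.integral_congr
    intro v hv
    rw [Set.uIcc_of_le hst] at hv
    show (∫ w in s..v, (lam 0 w + lam 1 w) * (S w)⁻¹) * ((tstar - v) * (S v * lam j v)) = _
    rw [hSinv v hv.1]
    have := hSne v
    field_simp
  have hrhs4 : (∫ v in s..tstar, ((tstar - v) * lam j v
          - ((tstar - v) * (S v * lam j v)) * (S s)⁻¹))
      = (∫ v in s..tstar, (tstar - v) * lam j v)
        - (∫ v in s..tstar, (tstar - v) * (S v * lam j v)) * (S s)⁻¹ := by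
    rw [intervalIntegral.integral_sub int1 ((hfint s tstar).mul_const _),
      intervalIntegral.integral_mul_const]
  rw [hLHS, hrhs1, hrhs2, hrhs3, hrhs4]
  ring
end
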